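/- Let f : ℝ_{>0}ⁿ → ℝ be defined by f(λ) = −S_α(1/λ₁, …, 1/λ_n) for a fixed 1 ≤ α ≤ n. Then f is concave on the positive orthant. Equivalently, the map A ↦ −S_α(A⁻¹), defined on positive definite Hermitian matrices via eigenvalues, is concave. -/

import Mathlib

open Finset Matrix
open scoped ComplexOrder

/-- The `k`-th elementary symmetric polynomial of `f : Fin n → ℝ`. -/
def esymm {n : ℕ} (k : ℕ) (f : Fin n → ℝ) : ℝ :=
  ∑ s ∈ Finset.univ.powersetCard k, ∏ i ∈ s, f i

/-- `S_α(M)` for a Hermitian matrix: the `α`-th elementary symmetric polynomial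
of its eigenvalues (junk value `0` if `M` is not Hermitian). -/
noncomputable def Salpha {n : ℕ} (α : ℕ) (M : Matrix (Fin n) (Fin n) ℂ) : ℝ :=
  if h : M.IsHermitian then esymm α h.eigenvalues else 0

namespace GLZ
open Polynomial
variable {n : ℕ}

def orth (n : ℕ) : Set (Fin n → ℝ) := {lam | ∀ i, 0 < lam i}

lemma convex_orth : Convex ℝ (orth n) := by
  have : orth n = Set.univ.pi (fun _ : Fin n => Set.Ioi (0:ℝ)) := by
    ext x; simp [orth, Set.mem_pi]
  rw [this]
  exact convex_pi fun i _ => convex_Ioi 0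

lemma convexOn_prod_inv (s : Finset (Fin n)) :
    ConvexOn ℝ (orth n) (fun x => ∏ i ∈ s, (x i)⁻¹) := by
  have key : ∀ x ∈ orth n, ∏ i ∈ s, (x i)⁻¹ = Real.exp (∑ i ∈ s, -Real.log (x i)) := by
    intro x hx
    rw [Real.exp_sum]
    refine Finset.prod_congr rfl fun i _ => ?_
    rw [Real.exp_neg, Real.exp_log (hx i)]
  refine ⟨convex_orth, fun x hx y hy a b ha hb hab => ?_⟩
  simp only [smul_eq_mul]
  rw [key _ (convex_orth hx hy ha hb hab), key _ hx, key _ hy]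
  have hlog : ∑ i ∈ s, -Real.log ((a • x + b • y) i) ≤
      a * (∑ i ∈ s, -Real.log (x i)) + b * (∑ i ∈ s, -Real.log (y i)) := by
    rw [Finset.mul_sum, Finset.mul_sum, ← Finset.sum_add_distrib]
    refine Finset.sum_le_sum fun i _ => ?_
    have := strictConcaveOn_log_Ioi.concaveOn.2 (Set.mem_Ioi.2 (hx i)) (Set.mem_Ioi.2 (hy i))
      ha hb hab
    simp only [smul_eq_mul] at this ⊢
    have h2 : a * Real.log (x i) + b * Real.log (y i) ≤ Real.log (a * x i + b * y i) := this
    simp only [Pi.add_apply, Pi.smul_apply, smul_eq_mul]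
    nlinarith
  calc Real.exp (∑ i ∈ s, -Real.log ((a • x + b • y) i))
      ≤ Real.exp (a * (∑ i ∈ s, -Real.log (x i)) + b * (∑ i ∈ s, -Real.log (y i))) :=
        Real.exp_le_exp.2 hlog
    _ ≤ a * Real.exp (∑ i ∈ s, -Real.log (x i)) + b * Real.exp (∑ i ∈ s, -Real.log (y i)) := by
        have := convexOn_exp.2 (Set.mem_univ (∑ i ∈ s, -Real.log (x i)))
          (Set.mem_univ (∑ i ∈ s, -Real.log (y i))) ha hb hab
        simpa using this

lemma concaveOn_vector (α : ℕ) :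
    ConcaveOn ℝ (orth n) (fun lam => -esymm α fun i => (lam i)⁻¹) := by
  have : (fun lam : Fin n → ℝ => -esymm α fun i => (lam i)⁻¹) =
      fun lam => ∑ s ∈ Finset.univ.powersetCard α, -(∏ i ∈ s, (lam i)⁻¹) := by
    funext lam; simp [esymm]
  rw [this]
  classical
  induction (Finset.univ.powersetCard α : Finset (Finset (Fin n))) using Finset.cons_induction with
  | empty => simpa using concaveOn_const 0 convex_orth
  | cons s t hst ih =>
      simp only [Finset.sum_cons]
      exact ((convexOn_prod_inv s).neg).add ih

lemma esymm_eq_multiset (k : ℕ) (f : Fin n → ℝ) :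
    esymm k f = (Finset.univ.val.map f).esymm k := by
  rw [Finset.esymm_map_val]; rfl

lemma esymm_comp_perm (k : ℕ) (f : Fin n → ℝ) (σ : Equiv.Perm (Fin n)) :
    esymm k (f ∘ σ) = esymm k f := by
  rw [esymm_eq_multiset, esymm_eq_multiset]
  congr 1
  have h1 : Finset.univ.val.map (f ∘ σ) = (Finset.univ.val.map σ).map f := by
    rw [Multiset.map_map]
  rw [h1]
  congr 1
  calc Finset.univ.val.map ⇑σ = (Finset.univ.map σ.toEmbedding).val := by
        rw [Finset.map_val]; rfl
    _ = Finset.univ.val := by rw [Finset.map_univ_equiv]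

lemma permMatrix_mulVec (σ : Equiv.Perm (Fin n)) (μ : Fin n → ℝ) :
    σ.permMatrix ℝ *ᵥ μ = fun i => μ (σ i) := by
  funext i
  simp only [mulVec, dotProduct, Equiv.Perm.permMatrix, PEquiv.toMatrix_apply,
    Equiv.toPEquiv_apply, Option.mem_def, Option.some.injEq]
  simp [eq_comm]

lemma sum_mulVec {ι} (t : Finset ι) (M : ι → Matrix (Fin n) (Fin n) ℝ) (v : Fin n → ℝ) :
    (∑ i ∈ t, M i) *ᵥ v = ∑ i ∈ t, (M i) *ᵥ v := by
  classical
  induction t using Finset.cons_induction with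
  | empty => simp [Matrix.zero_mulVec]
  | cons s t hst ih => rw [Finset.sum_cons, Finset.sum_cons, Matrix.add_mulVec, ih]

/-- Schur majorization step. -/
lemma schur_step (α : ℕ) {S : Matrix (Fin n) (Fin n) ℝ}
    (hS : S ∈ doublyStochastic ℝ (Fin n)) {μ : Fin n → ℝ} (hμ : ∀ i, 0 < μ i) :
    -esymm α (fun i => (μ i)⁻¹) ≤ -esymm α (fun i => ((S *ᵥ μ) i)⁻¹) := by
  obtain ⟨w, hw0, hw1, hwS⟩ := exists_eq_sum_perm_of_mem_doublyStochastic hS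
  have hSμ : S *ᵥ μ = ∑ σ : Equiv.Perm (Fin n), w σ • (fun i => μ (σ i)) := by
    rw [← hwS, sum_mulVec]
    refine Finset.sum_congr rfl fun σ _ => ?_
    rw [Matrix.smul_mulVec, permMatrix_mulVec]
  have hconc := concaveOn_vector (n := n) α
  have hj := hconc.le_map_sum (t := (Finset.univ : Finset (Equiv.Perm (Fin n))))
    (w := w) (p := fun σ => fun i => μ (σ i)) (fun σ _ => hw0 σ) hw1
    (fun σ _ => fun i => hμ (σ i))
  rw [← hSμ] at hj
  refine le_trans ?_ hj
  have hsym : ∀ σ : Equiv.Perm (Fin n),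
      esymm α (fun i => (μ (σ i))⁻¹) = esymm α (fun i => (μ i)⁻¹) :=
    fun σ => esymm_comp_perm α (fun i => (μ i)⁻¹) σ
  calc -esymm α (fun i => (μ i)⁻¹)
      = ∑ σ : Equiv.Perm (Fin n), w σ * (-esymm α fun i => (μ i)⁻¹) := by
        rw [← Finset.sum_mul, hw1, one_mul]
    _ ≤ ∑ σ : Equiv.Perm (Fin n), w σ • (fun lam : Fin n → ℝ =>
          -esymm α fun i => (lam i)⁻¹) (fun i => μ (σ i)) := by
        simp only [smul_eq_mul, hsym]; exact le_refl _

/-- charpoly is invariant under unitary conjugation. -/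
lemma charpoly_unitary_conj (U D : Matrix (Fin n) (Fin n) ℂ)
    (hU : U ∈ Matrix.unitaryGroup (Fin n) ℂ) :
    (U * D * star U).charpoly = D.charpoly := by
  have hU1 : U * star U = 1 := (Matrix.mem_unitaryGroup_iff).mp hU
  set Cm : Matrix (Fin n) (Fin n) ℂ →+* Matrix (Fin n) (Fin n) ℂ[X] :=
    (Polynomial.C : ℂ →+* ℂ[X]).mapMatrix with hCm
  have hcomm : ∀ M : Matrix (Fin n) (Fin n) ℂ[X],
      Matrix.scalar (Fin n) (X : ℂ[X]) * M = M * Matrix.scalar (Fin n) (X : ℂ[X]) := by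
    intro M
    exact (Matrix.scalar_commute (X : ℂ[X]) (fun r => Commute.all _ _) M)
  have hmulstar : Cm U * Cm (star U) = 1 := by
    rw [← _root_.map_mul, hU1, _root_.map_one]
  have h : charmatrix (U * D * star U) = Cm U * charmatrix D * Cm (star U) := by
    rw [charmatrix, charmatrix, mul_sub, sub_mul]
    congr 1
    · symm
      rw [mul_assoc, hcomm (Cm (star U)), ← mul_assoc, hmulstar, one_mul]
    · rw [← _root_.map_mul, ← _root_.map_mul]
  unfold Matrix.charpoly
  rw [h, Matrix.det_mul, Matrix.det_mul]
  have : (Cm U).det * (Cm (star U)).det = 1 := by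
    rw [← Matrix.det_mul, hmulstar, Matrix.det_one]
  calc (Cm U).det * (charmatrix D).det * (Cm (star U)).det
      = (charmatrix D).det * ((Cm U).det * (Cm (star U)).det) := by ring
    _ = (charmatrix D).det := by rw [this, mul_one]

lemma charpoly_diagonal (d : Fin n → ℂ) :
    (Matrix.diagonal d).charpoly = ∏ i, (X - C (d i)) := by
  rw [Matrix.charpoly_of_upperTriangular _ (Matrix.blockTriangular_diagonal d)]
  simp [Matrix.diagonal_apply_eq]

lemma roots_prod_X_sub_C' (g : Fin n → ℂ) :
    (∏ i, (X - C (g i))).roots = Finset.univ.val.map g := by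
  have : (∏ i, (X - C (g i))) = ((Finset.univ.val.map g).map (fun a => X - C a)).prod := by
    rw [Multiset.map_map, Finset.prod]
    rfl
  rw [this, Polynomial.roots_multiset_prod_X_sub_C]

/-- eigenvalue multiset of a Hermitian matrix = roots of its charpoly. -/
lemma eig_multiset (B : Matrix (Fin n) (Fin n) ℂ) (hB : B.IsHermitian) :
    Finset.univ.val.map (fun i => ((hB.eigenvalues i : ℝ) : ℂ)) = B.charpoly.roots := by
  conv_rhs => rw [hB.spectral_theorem, Unitary.conjStarAlgAut_apply]
  rw [charpoly_unitary_conj _ _ (hB.eigenvectorUnitary).2, charpoly_diagonal,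
    roots_prod_X_sub_C']
  rfl

/-- `A⁻¹ = U D⁻¹ U*` for posdef `A`. -/
lemma inv_spectral (A : Matrix (Fin n) (Fin n) ℂ) (hA : A.PosDef) :
    A⁻¹ = (hA.isHermitian.eigenvectorUnitary : Matrix (Fin n) (Fin n) ℂ) *
      Matrix.diagonal (fun i => (((hA.isHermitian.eigenvalues i)⁻¹ : ℝ) : ℂ)) *
      star (hA.isHermitian.eigenvectorUnitary : Matrix (Fin n) (Fin n) ℂ) := by
  set U : Matrix (Fin n) (Fin n) ℂ := (hA.isHermitian.eigenvectorUnitary : Matrix (Fin n) (Fin n) ℂ)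
  have hU1 : U * star U = 1 := (Matrix.mem_unitaryGroup_iff).mp hA.isHermitian.eigenvectorUnitary.2
  have hU2 : star U * U = 1 := (Matrix.mem_unitaryGroup_iff').mp hA.isHermitian.eigenvectorUnitary.2
  have hUinv : U⁻¹ = star U := Matrix.inv_eq_left_inv hU2
  have hsUinv : (star U)⁻¹ = U := Matrix.inv_eq_left_inv hU1
  have hD : (Matrix.diagonal (RCLike.ofReal ∘ hA.isHermitian.eigenvalues) :
      Matrix (Fin n) (Fin n) ℂ)⁻¹ =
      Matrix.diagonal (fun i => (((hA.isHermitian.eigenvalues i)⁻¹ : ℝ) : ℂ)) := by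
    refine Matrix.inv_eq_left_inv ?_
    rw [Matrix.diagonal_mul_diagonal]
    have hfun : (fun i => (((hA.isHermitian.eigenvalues i)⁻¹ : ℝ) : ℂ) *
        (RCLike.ofReal ∘ hA.isHermitian.eigenvalues) i) = fun _ => (1 : ℂ) := by
      funext i
      have hμ : hA.isHermitian.eigenvalues i ≠ 0 := (hA.eigenvalues_pos i).ne'
      show (((hA.isHermitian.eigenvalues i)⁻¹ : ℝ) : ℂ) *
        ((hA.isHermitian.eigenvalues i : ℝ) : ℂ) = 1
      rw [← Complex.ofReal_mul, inv_mul_cancel₀ hμ, Complex.ofReal_one]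
    rw [hfun, Matrix.diagonal_one]
  conv_lhs => rw [hA.isHermitian.spectral_theorem, Unitary.conjStarAlgAut_apply]
  rw [Matrix.mul_inv_rev, Matrix.mul_inv_rev, hUinv, hsUinv, hD, mul_assoc]

/-- The key identity: `S_α(A⁻¹) = e_α(1/μ)` where `μ` are the eigenvalues of `A`. -/
lemma salpha_inv (α : ℕ) (A : Matrix (Fin n) (Fin n) ℂ) (hA : A.PosDef) :
    Salpha α A⁻¹ = esymm α (fun i => (hA.isHermitian.eigenvalues i)⁻¹) := by
  have hAi : (A⁻¹).PosDef := hA.inv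
  rw [Salpha, dif_pos hAi.isHermitian]
  suffices h : Finset.univ.val.map hAi.isHermitian.eigenvalues =
      Finset.univ.val.map (fun i => (hA.isHermitian.eigenvalues i)⁻¹) by
    rw [esymm_eq_multiset, esymm_eq_multiset, h]
  have hc : Finset.univ.val.map (fun i => ((hAi.isHermitian.eigenvalues i : ℝ) : ℂ)) =
      Finset.univ.val.map (fun i => (((hA.isHermitian.eigenvalues i)⁻¹ : ℝ) : ℂ)) := by
    rw [eig_multiset _ hAi.isHermitian]
    conv_lhs => rw [inv_spectral A hA]
    rw [charpoly_unitary_conj _ _ hA.isHermitian.eigenvectorUnitary.2, charpoly_diagonal,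
      roots_prod_X_sub_C']
  have := congrArg (Multiset.map Complex.re) hc
  rw [Multiset.map_map, Multiset.map_map] at this
  simpa using this

/-- The squared moduli of a unitary matrix form a doubly stochastic matrix. -/
lemma unitary_normSq_doublyStochastic (V : Matrix (Fin n) (Fin n) ℂ)
    (hV : V ∈ Matrix.unitaryGroup (Fin n) ℂ) :
    Matrix.of (fun i j => Complex.normSq (V i j)) ∈ doublyStochastic ℝ (Fin n) := by
  have hV1 : V * star V = 1 := (Matrix.mem_unitaryGroup_iff).mp hV
  have hV2 : star V * V = 1 := (Matrix.mem_unitaryGroup_iff').mp hV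
  rw [mem_doublyStochastic_iff_sum]
  refine ⟨fun i j => Complex.normSq_nonneg _, fun i => ?_, fun j => ?_⟩
  · have h1 : (V * star V) i i = 1 := by rw [hV1]; simp [Matrix.one_apply]
    rw [Matrix.mul_apply] at h1
    have h2 : ∑ j, V i j * star V j i = ∑ j, (Complex.normSq (V i j) : ℂ) := by
      refine Finset.sum_congr rfl fun j _ => ?_
      rw [Matrix.star_apply]
      exact Complex.mul_conj (V i j)
    rw [h2] at h1
    have := Complex.ofReal_injective
      (by push_cast at h1 ⊢; exact h1 :
        ((∑ j, Complex.normSq (V i j) : ℝ) : ℂ) = ((1:ℝ):ℂ))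
    simpa using this
  · have h1 : (star V * V) j j = 1 := by rw [hV2]; simp [Matrix.one_apply]
    rw [Matrix.mul_apply] at h1
    have h2 : ∑ i, star V j i * V i j = ∑ i, (Complex.normSq (V i j) : ℂ) := by
      refine Finset.sum_congr rfl fun i _ => ?_
      rw [Matrix.star_apply, mul_comm]
      exact Complex.mul_conj (V i j)
    rw [h2] at h1
    have := Complex.ofReal_injective
      (by push_cast at h1 ⊢; exact h1 :
        ((∑ i, Complex.normSq (V i j) : ℝ) : ℂ) = ((1:ℝ):ℂ))
    simpa using this

/-- Diagonal entries of `V D V*` for unitary `V`, real diagonal `D`. -/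
lemma diag_conj_diagonal (V : Matrix (Fin n) (Fin n) ℂ) (d : Fin n → ℝ) (i : Fin n) :
    (V * Matrix.diagonal (fun j => ((d j : ℝ) : ℂ)) * star V) i i =
      ((∑ j, Complex.normSq (V i j) * d j : ℝ) : ℂ) := by
  rw [Matrix.mul_apply]
  push_cast
  refine Finset.sum_congr rfl fun j _ => ?_
  rw [Matrix.mul_diagonal, Matrix.star_apply]
  have h : (star (V i j)) = (starRingEnd ℂ) (V i j) := rfl
  rw [h, mul_right_comm, Complex.mul_conj]

lemma posDef_smul {A : Matrix (Fin n) (Fin n) ℂ} (hA : A.PosDef) {c : ℝ} (hc : 0 < c) :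
    (c • A).PosDef := by
  constructor
  · show (c • A)ᴴ = c • A
    rw [Matrix.conjTranspose_smul, star_trivial, hA.isHermitian.eq]
  · exact (hA.smul hc).2

lemma posDef_combo {A B : Matrix (Fin n) (Fin n) ℂ} (hA : A.PosDef) (hB : B.PosDef)
    {a b : ℝ} (ha : 0 ≤ a) (hb : 0 ≤ b) (hab : a + b = 1) : (a • A + b • B).PosDef := by
  rcases eq_or_lt_of_le ha with rfl | ha'
  · have hb1 : b = 1 := by linarith
    subst hb1; simpa using hB
  rcases eq_or_lt_of_le hb with rfl | hb'
  · have ha1 : a = 1 := by linarith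
    subst ha1; simpa using hA
  exact (posDef_smul hA ha').add (posDef_smul hB hb')

lemma mulVec_pos {S : Matrix (Fin n) (Fin n) ℝ} (hS : S ∈ doublyStochastic ℝ (Fin n))
    {μ : Fin n → ℝ} (hμ : ∀ i, 0 < μ i) (i : Fin n) : 0 < (S *ᵥ μ) i := by
  have hrow := sum_row_of_mem_doublyStochastic hS i
  have hnn : ∀ j, 0 ≤ S i j := fun j => nonneg_of_mem_doublyStochastic hS
  obtain ⟨j, hj⟩ : ∃ j, S i j ≠ 0 := by
    by_contra h
    push_neg at h
    rw [Finset.sum_congr rfl (fun j _ => h j)] at hrow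
    simp at hrow
  refine Finset.sum_pos' (fun j _ => mul_nonneg (hnn j) (hμ j).le)
    ⟨j, Finset.mem_univ j, mul_pos ((hnn j).lt_of_ne' hj) (hμ j)⟩

/-- Davis step: for posdef `B` and unitary `W`, the diagonal of `W* B W` is a positive
vector `x` with `-e_α(1/μ_B) ≤ -e_α(1/x)`. -/
lemma davis_aux (α : ℕ) {B : Matrix (Fin n) (Fin n) ℂ} (hB : B.PosDef)
    (W : Matrix (Fin n) (Fin n) ℂ) (hW : W ∈ Matrix.unitaryGroup (Fin n) ℂ) :
    ∃ x : Fin n → ℝ, (∀ i, 0 < x i) ∧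
      (∀ i, (star W * B * W) i i = ((x i : ℝ) : ℂ)) ∧
      -esymm α (fun i => (hB.isHermitian.eigenvalues i)⁻¹) ≤
        -esymm α (fun i => (x i)⁻¹) := by
  set UB : Matrix (Fin n) (Fin n) ℂ :=
    (hB.isHermitian.eigenvectorUnitary : Matrix (Fin n) (Fin n) ℂ) with hUB
  set V : Matrix (Fin n) (Fin n) ℂ := star W * UB with hV
  have hVmem : V ∈ Matrix.unitaryGroup (Fin n) ℂ :=
    mul_mem (Unitary.star_mem hW) hB.isHermitian.eigenvectorUnitary.2
  set μ : Fin n → ℝ := hB.isHermitian.eigenvalues with hμdef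
  have hμpos : ∀ i, 0 < μ i := fun i => hB.eigenvalues_pos i
  set S : Matrix (Fin n) (Fin n) ℝ := Matrix.of (fun i j => Complex.normSq (V i j)) with hS
  have hSds : S ∈ doublyStochastic ℝ (Fin n) := unitary_normSq_doublyStochastic V hVmem
  refine ⟨S *ᵥ μ, mulVec_pos hSds hμpos, fun i => ?_, schur_step α hSds hμpos⟩
  have hconj : star W * B * W = V * Matrix.diagonal (fun j => ((μ j : ℝ) : ℂ)) * star V := by
    conv_lhs => rw [hB.isHermitian.spectral_theorem, Unitary.conjStarAlgAut_apply]
    rw [hV, Matrix.star_mul, star_star]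
    simp only [Matrix.mul_assoc]
    rfl
  rw [hconj, diag_conj_diagonal]
  congr 1

theorem stmt18_aux (n α : ℕ) :
    ConcaveOn ℝ {A : Matrix (Fin n) (Fin n) ℂ | A.PosDef}
      (fun A => -Salpha α A⁻¹) := by
  constructor
  · intro A hA B hB a b ha hb hab
    exact posDef_combo hA hB ha hb hab
  intro A₁ hA₁ A₂ hA₂ a b ha hb hab
  simp only [Set.mem_setOf_eq] at hA₁ hA₂
  rcases eq_or_lt_of_le ha with rfl | ha'
  · have hb1 : b = 1 := by linarith
    subst hb1; simp
  rcases eq_or_lt_of_le hb with rfl | hb'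
  · have ha1 : a = 1 := by linarith
    subst ha1; simp
  have hA : (a • A₁ + b • A₂).PosDef := posDef_combo hA₁ hA₂ ha hb hab
  set U : Matrix (Fin n) (Fin n) ℂ :=
    (hA.isHermitian.eigenvectorUnitary : Matrix (Fin n) (Fin n) ℂ) with hU
  obtain ⟨x₁, hx₁pos, hx₁diag, hx₁le⟩ :=
    davis_aux α hA₁ U hA.isHermitian.eigenvectorUnitary.2
  obtain ⟨x₂, hx₂pos, hx₂diag, hx₂le⟩ :=
    davis_aux α hA₂ U hA.isHermitian.eigenvectorUnitary.2
  set μ : Fin n → ℝ := hA.isHermitian.eigenvalues with hμdef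
  have hμeq : ∀ i, μ i = a * x₁ i + b * x₂ i := by
    intro i
    have hdiag := congrArg (fun M : Matrix (Fin n) (Fin n) ℂ => M i i)
      (show star U * (a • A₁ + b • A₂) * U =
          Matrix.diagonal (RCLike.ofReal ∘ hA.isHermitian.eigenvalues) from by
          have := hA.isHermitian.conjStarAlgAut_star_eigenvectorUnitary
          simp only [Unitary.conjStarAlgAut_apply, star_star, Unitary.coe_star] at this
          exact this)
    have hexp : star U * (a • A₁ + b • A₂) * U =
        a • (star U * A₁ * U) + b • (star U * A₂ * U) := by
      rw [Matrix.mul_add, Matrix.add_mul, Matrix.mul_smul, Matrix.mul_smul,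
        Matrix.smul_mul, Matrix.smul_mul]
    rw [hexp] at hdiag
    have : a • ((x₁ i : ℝ) : ℂ) + b • ((x₂ i : ℝ) : ℂ) = ((μ i : ℝ) : ℂ) := by
      rw [← hx₁diag i, ← hx₂diag i]
      calc a • (star U * A₁ * U) i i + b • (star U * A₂ * U) i i
          = (a • (star U * A₁ * U) + b • (star U * A₂ * U)) i i := by
            simp [Matrix.add_apply, Matrix.smul_apply]
        _ = ((μ i : ℝ) : ℂ) := by rw [hdiag]; simp [Matrix.diagonal_apply_eq]; rfl
    apply Complex.ofReal_injective
    rw [← this]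
    push_cast [Complex.real_smul]
    ring
  have hcomb := (concaveOn_vector (n := n) α).2
    (fun i => hx₁pos i) (fun i => hx₂pos i) ha hb hab
  have hμfun : μ = a • x₁ + b • x₂ := by
    funext i; rw [hμeq i]; rfl
  simp only [Set.mem_setOf_eq]
  rw [show (A₁ : Matrix (Fin n) (Fin n) ℂ) = A₁ from rfl]
  show a • (-Salpha α A₁⁻¹) + b • (-Salpha α A₂⁻¹) ≤ -Salpha α (a • A₁ + b • A₂)⁻¹
  rw [salpha_inv α A₁ hA₁, salpha_inv α A₂ hA₂, salpha_inv α _ hA]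
  have hgoal : -esymm α (fun i => (μ i)⁻¹) =
      (fun lam : Fin n → ℝ => -esymm α fun i => (lam i)⁻¹) (a • x₁ + b • x₂) := by
    rw [← hμfun]
  calc a • -esymm α (fun i => (hA₁.isHermitian.eigenvalues i)⁻¹) +
        b • -esymm α (fun i => (hA₂.isHermitian.eigenvalues i)⁻¹)
      ≤ a • -esymm α (fun i => (x₁ i)⁻¹) + b • -esymm α (fun i => (x₂ i)⁻¹) := by
        have h1 := smul_le_smul_of_nonneg_left hx₁le ha
        have h2 := smul_le_smul_of_nonneg_left hx₂le hb
        exact add_le_add h1 h2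
    _ ≤ (fun lam : Fin n → ℝ => -esymm α fun i => (lam i)⁻¹) (a • x₁ + b • x₂) := hcomb
    _ = -esymm α (fun i => (μ i)⁻¹) := hgoal.symm

end GLZ

/-- Concavity (Guan–Li–Zhang) of `λ ↦ −S_α(1/λ)` on the positive orthant, and
equivalently of `A ↦ −S_α(A⁻¹)` on positive definite Hermitian matrices. -/
theorem stmt_18 (n α : ℕ) (hn : 1 ≤ n) (hα1 : 1 ≤ α) (hαn : α ≤ n) :
    ConcaveOn ℝ {lam : Fin n → ℝ | ∀ i, 0 < lam i}
        (fun lam => -esymm α fun i => (lam i)⁻¹) ∧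
      ConcaveOn ℝ {A : Matrix (Fin n) (Fin n) ℂ | A.PosDef}
        (fun A => -Salpha α A⁻¹) :=
  ⟨GLZ.concaveOn_vector α, GLZ.stmt18_aux n α⟩
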